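/- arXiv:1403.6362 — 4 statements merged into one kernel-verified Lean document; each statement's English description precedes it below -/
import Mathlib

section
/- Define G(ξ₁,ξ₂) = 2ξ₂/√(1+ω²ξ₁²) + Λ₀(ξ₁²+ξ₂²) − (a/4)(ξ₁²+ξ₂²)². Then the gradient identities ∂G/∂ξ₁ = −[(2+2ω²(ξ₁²+ξ₂²))/(1+ω²ξ₁²)^{3/2}]·f₂ and ∂G/∂ξ₂ = [(2+2ω²(ξ₁²+ξ₂²))/(1+ω²ξ₁²)^{3/2}]·f₁ hold, where f₁(ξ₁,ξ₂) = (1+ω²ξ₁²)(2 + √(1+ω²ξ₁²)·ξ₂·(2Λ₀ − a(ξ₁²+ξ₂²)))/(2(1+ω²(ξ₁²+ξ₂²))) and f₂(ξ₁,ξ₂) = ξ₁(2ω²ξ₂ − 2Λ₀(1+ω²ξ₁²)^{3/2} + a(ξ₁²+ξ₂²)(1+ω²ξ₁²)^{3/2})/(2(1+ω²(ξ₁²+ξ₂²))). -/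
noncomputable def G (ω Λ₀ a ξ₁ ξ₂ : ℝ) : ℝ :=
  2 * ξ₂ / Real.sqrt (1 + ω^2 * ξ₁^2) + Λ₀ * (ξ₁^2 + ξ₂^2) - a / 4 * (ξ₁^2 + ξ₂^2)^2

noncomputable def f₁ (ω Λ₀ a ξ₁ ξ₂ : ℝ) : ℝ :=
  (1 + ω^2 * ξ₁^2) * (2 + Real.sqrt (1 + ω^2 * ξ₁^2) * ξ₂ * (2 * Λ₀ - a * (ξ₁^2 + ξ₂^2))) /
    (2 * (1 + ω^2 * (ξ₁^2 + ξ₂^2)))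

noncomputable def f₂ (ω Λ₀ a ξ₁ ξ₂ : ℝ) : ℝ :=
  ξ₁ * (2 * ω^2 * ξ₂ - 2 * Λ₀ * (1 + ω^2 * ξ₁^2) ^ ((3:ℝ)/2)
      + a * (ξ₁^2 + ξ₂^2) * (1 + ω^2 * ξ₁^2) ^ ((3:ℝ)/2)) /
    (2 * (1 + ω^2 * (ξ₁^2 + ξ₂^2)))

/-!
Both partial derivatives of `G` are elementary. With `s = √(1 + ω²ξ₁²)`, so that
`(1 + ω²ξ₁²)^{3/2} = s³`, each identity becomes a rational identity in `s, ξ₁, ξ₂`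
once `1 + ω²ξ₁²` is replaced by `s²`; the common factor `1 + ω²(ξ₁² + ξ₂²)` cancels
against the denominators of `f₁` and `f₂`.
-/

open Real

lemma rpow_three_halves_eq_sqrt_pow {x : ℝ} (hx : 0 ≤ x) : x ^ ((3:ℝ)/2) = √x ^ 3 := by
  rw [rpow_div_two_eq_sqrt 3 hx]
  exact_mod_cast rpow_natCast √x 3

section GradientOfG

variable (ω Λ₀ a ξ₁ ξ₂ : ℝ)

lemma hasDerivAt_G_fst :
    HasDerivAt (fun x => G ω Λ₀ a x ξ₂)
      (-2 * ω^2 * ξ₁ * ξ₂ / √(1 + ω^2 * ξ₁^2) ^ 3 + 2 * Λ₀ * ξ₁ - a * (ξ₁^2 + ξ₂^2) * ξ₁) ξ₁ := by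
  have hX : 0 < 1 + ω^2 * ξ₁^2 := by positivity
  have hsqrt : HasDerivAt (fun x => √(1 + ω^2 * x^2)) (ω^2 * ξ₁ / √(1 + ω^2 * ξ₁^2)) ξ₁ := by
    refine ((((hasDerivAt_pow 2 ξ₁).const_mul (ω^2)).const_add 1).sqrt hX.ne').congr_deriv ?_
    field_simp
    ring
  have hsq : HasDerivAt (fun x => x^2 + ξ₂^2) (2 * ξ₁) ξ₁ := by
    simpa using (hasDerivAt_pow 2 ξ₁).add_const (ξ₂^2)
  have hG := (((hasDerivAt_const ξ₁ (2 * ξ₂)).div hsqrt (sqrt_pos.mpr hX).ne').add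
    (hsq.const_mul Λ₀)).sub ((hsq.pow 2).const_mul (a / 4))
  refine hG.congr_deriv ?_
  field_simp
  ring

lemma hasDerivAt_G_snd :
    HasDerivAt (fun y => G ω Λ₀ a ξ₁ y)
      (2 / √(1 + ω^2 * ξ₁^2) + 2 * Λ₀ * ξ₂ - a * (ξ₁^2 + ξ₂^2) * ξ₂) ξ₂ := by
  have hsq : HasDerivAt (fun y => ξ₁^2 + y^2) (2 * ξ₂) ξ₂ := by
    simpa using (hasDerivAt_pow 2 ξ₂).const_add (ξ₁^2)
  have hG := ((((hasDerivAt_id ξ₂).const_mul 2).div_const √(1 + ω^2 * ξ₁^2)).add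
    (hsq.const_mul Λ₀)).sub ((hsq.pow 2).const_mul (a / 4))
  refine hG.congr_deriv ?_
  ring

end GradientOfG

theorem gradient_identities_general (ω Λ₀ a : ℝ) (ξ₁ ξ₂ : ℝ) :
    HasDerivAt (fun x => G ω Λ₀ a x ξ₂)
      (-((2 + 2 * ω^2 * (ξ₁^2 + ξ₂^2)) / (1 + ω^2 * ξ₁^2) ^ ((3:ℝ)/2)) * f₂ ω Λ₀ a ξ₁ ξ₂) ξ₁ ∧
    HasDerivAt (fun y => G ω Λ₀ a ξ₁ y)
      ((2 + 2 * ω^2 * (ξ₁^2 + ξ₂^2)) / (1 + ω^2 * ξ₁^2) ^ ((3:ℝ)/2) * f₁ ω Λ₀ a ξ₁ ξ₂) ξ₂ := by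
  have hX : 0 < 1 + ω^2 * ξ₁^2 := by positivity
  have hs : 0 < √(1 + ω^2 * ξ₁^2) := sqrt_pos.mpr hX
  have hden : 0 < 1 + ω^2 * (ξ₁^2 + ξ₂^2) := by positivity
  simp only [f₁, f₂, rpow_three_halves_eq_sqrt_pow hX.le]
  constructor
  · refine (hasDerivAt_G_fst ω Λ₀ a ξ₁ ξ₂).congr_deriv ?_
    field_simp
    ring
  · refine (hasDerivAt_G_snd ω Λ₀ a ξ₁ ξ₂).congr_deriv ?_
    -- write the bare `1 + ω^2 * ξ₁^2` as `√(1 + ω^2 * ξ₁^2)^2`, so that only the square root is an atom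
    rw [← sq_sqrt hX.le, sqrt_sq hs.le]
    field_simp
    ring

theorem gradient_identities (ω Λ₀ a : ℝ) (hω : ω > 0) (ξ₁ ξ₂ : ℝ) :
    HasDerivAt (fun x => G ω Λ₀ a x ξ₂)
      (-((2 + 2 * ω^2 * (ξ₁^2 + ξ₂^2)) / (1 + ω^2 * ξ₁^2) ^ ((3:ℝ)/2)) * f₂ ω Λ₀ a ξ₁ ξ₂) ξ₁ ∧
    HasDerivAt (fun y => G ω Λ₀ a ξ₁ y)
      ((2 + 2 * ω^2 * (ξ₁^2 + ξ₂^2)) / (1 + ω^2 * ξ₁^2) ^ ((3:ℝ)/2) * f₁ ω Λ₀ a ξ₁ ξ₂) ξ₂ :=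
  gradient_identities_general ω Λ₀ a ξ₁ ξ₂
end

section
/- If (ξ₁(s), ξ₂(s)) solves the ODE system ξ₁' = f₁(ξ₁,ξ₂), ξ₂' = f₂(ξ₁,ξ₂) (with f₁, f₂ as above), then the function s ↦ G(ξ₁(s), ξ₂(s)) is constant. -/
noncomputable def G_partial₁ (ω Λ₀ a ξ₁ ξ₂ : ℝ) : ℝ :=
  -2 * ω ^ 2 * ξ₁ * ξ₂ / Real.sqrt (1 + ω ^ 2 * ξ₁ ^ 2) ^ 3 + ξ₁ * (2 * Λ₀ - a * (ξ₁ ^ 2 + ξ₂ ^ 2))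

noncomputable def G_partial₂ (ω Λ₀ a ξ₁ ξ₂ : ℝ) : ℝ :=
  2 / Real.sqrt (1 + ω ^ 2 * ξ₁ ^ 2) + ξ₂ * (2 * Λ₀ - a * (ξ₁ ^ 2 + ξ₂ ^ 2))

noncomputable def hamiltonianFactor (ω ξ₁ ξ₂ : ℝ) : ℝ :=
  Real.sqrt (1 + ω ^ 2 * ξ₁ ^ 2) ^ 3 / (2 * (1 + ω ^ 2 * (ξ₁ ^ 2 + ξ₂ ^ 2)))

lemma hasDerivAt_G_comp {ω Λ₀ a : ℝ} {x y : ℝ → ℝ} {x' y' t : ℝ} (hx : HasDerivAt x x' t)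
    (hy : HasDerivAt y y' t) :
    HasDerivAt (fun s => G ω Λ₀ a (x s) (y s))
      (G_partial₁ ω Λ₀ a (x t) (y t) * x' + G_partial₂ ω Λ₀ a (x t) (y t) * y') t := by
  have hq : 0 < 1 + ω ^ 2 * x t ^ 2 := by positivity
  have hu : Real.sqrt (1 + ω ^ 2 * x t ^ 2) ≠ 0 := by positivity
  have hsqrt := (((hx.pow 2).const_mul (ω ^ 2)).const_add 1).sqrt hq.ne'
  have hr := (hx.pow 2).add (hy.pow 2)
  have hG := (((hy.const_mul 2).div hsqrt hu).add (hr.const_mul Λ₀)).sub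
    ((hr.pow 2).const_mul (a / 4))
  refine hG.congr_deriv ?_
  simp only [G_partial₁, G_partial₂, Pi.pow_apply, Pi.add_apply]
  field_simp
  ring

lemma f₁_eq_hamiltonianFactor_mul (ω Λ₀ a ξ₁ ξ₂ : ℝ) :
    f₁ ω Λ₀ a ξ₁ ξ₂ = hamiltonianFactor ω ξ₁ ξ₂ * G_partial₂ ω Λ₀ a ξ₁ ξ₂ := by
  have hu : Real.sqrt (1 + ω ^ 2 * ξ₁ ^ 2) ≠ 0 := by positivity
  have hu2 : Real.sqrt (1 + ω ^ 2 * ξ₁ ^ 2) ^ 2 = 1 + ω ^ 2 * ξ₁ ^ 2 := Real.sq_sqrt (by positivity)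
  simp only [f₁, hamiltonianFactor, G_partial₂]
  set u := Real.sqrt (1 + ω ^ 2 * ξ₁ ^ 2)
  rw [← hu2]
  field_simp

lemma f₂_eq_neg_hamiltonianFactor_mul (ω Λ₀ a ξ₁ ξ₂ : ℝ) :
    f₂ ω Λ₀ a ξ₁ ξ₂ = -(hamiltonianFactor ω ξ₁ ξ₂ * G_partial₁ ω Λ₀ a ξ₁ ξ₂) := by
  have hu : Real.sqrt (1 + ω ^ 2 * ξ₁ ^ 2) ≠ 0 := by positivity
  have h32 : (1 + ω ^ 2 * ξ₁ ^ 2) ^ ((3 : ℝ) / 2) = Real.sqrt (1 + ω ^ 2 * ξ₁ ^ 2) ^ 3 := by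
    rw [Real.rpow_div_two_eq_sqrt _ (by positivity)]
    exact_mod_cast Real.rpow_natCast _ 3
  simp only [f₂, hamiltonianFactor, G_partial₁, h32]
  field_simp
  ring

theorem G_constant_along_solutions_general (ω Λ₀ a : ℝ) (ξ₁ ξ₂ : ℝ → ℝ)
    (h₁ : ∀ s, HasDerivAt ξ₁ (f₁ ω Λ₀ a (ξ₁ s) (ξ₂ s)) s)
    (h₂ : ∀ s, HasDerivAt ξ₂ (f₂ ω Λ₀ a (ξ₁ s) (ξ₂ s)) s) :
    ∀ s t : ℝ, G ω Λ₀ a (ξ₁ s) (ξ₂ s) = G ω Λ₀ a (ξ₁ t) (ξ₂ t) := by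
  have hG : ∀ s, HasDerivAt (fun t => G ω Λ₀ a (ξ₁ t) (ξ₂ t)) 0 s := fun s =>
    (hasDerivAt_G_comp (h₁ s) (h₂ s)).congr_deriv <| by
      rw [f₁_eq_hamiltonianFactor_mul, f₂_eq_neg_hamiltonianFactor_mul]
      ring
  exact is_const_of_deriv_eq_zero (fun s => (hG s).differentiableAt) (fun s => (hG s).deriv)

theorem G_constant_along_solutions (ω Λ₀ a : ℝ) (hω : ω > 0) (ξ₁ ξ₂ : ℝ → ℝ)
    (h₁ : ∀ s, HasDerivAt ξ₁ (f₁ ω Λ₀ a (ξ₁ s) (ξ₂ s)) s)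
    (h₂ : ∀ s, HasDerivAt ξ₂ (f₂ ω Λ₀ a (ξ₁ s) (ξ₂ s)) s) :
    ∀ s t : ℝ, G ω Λ₀ a (ξ₁ s) (ξ₂ s) = G ω Λ₀ a (ξ₁ t) (ξ₂ t) :=
  G_constant_along_solutions_general ω Λ₀ a ξ₁ ξ₂ h₁ h₂
end

section
/- Fix a ≠ 0, Λ₀, C real. If a point (ξ₁,ξ₂) lies on the level set G(ξ₁,ξ₂) = C, then setting r = ξ₁² + ξ₂², the polynomial p(r) = −16C² + 64r + 32CΛ₀r − 16Λ₀²r² − 8aCr² + 8aΛ₀r³ − a²r⁴ satisfies p(r) ≥ 0. In particular, since p has degree 4 with negative leading coefficient −a², the set of r for which p(r) ≥ 0 is bounded, and hence every level set of G is bounded in ℝ². -/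
def p (a Λ₀ C r : ℝ) : ℝ :=
  -16 * C^2 + 64 * r + 32 * C * Λ₀ * r - 16 * Λ₀^2 * r^2 - 8 * a * C * r^2
    + 8 * a * Λ₀ * r^3 - a^2 * r^4

/-!
On the level set `G = C` we have `C - Λ₀ r + (a/4) r² = 2 ξ₂ / √(1 + ω² ξ₁²)`, whose square is at
most `4 ξ₂² ≤ 4 r`; and `p(r) = 16 (4 r - (C - Λ₀ r + (a/4) r²)²)`, so `p(r) ≥ 0` there.
Since `p` is a real polynomial of degree four with leading coefficient `-a² < 0`, it tends to `-∞`,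
so `{r | p(r) ≥ 0}` is bounded above, which bounds `ξ₁² + ξ₂²` on every level set.
-/

open Polynomial Filter

theorem Polynomial.bddAbove_setOf_eval_nonneg {P : ℝ[X]} (hdeg : 0 < P.degree)
    (hlc : P.leadingCoeff ≤ 0) : BddAbove {x | 0 ≤ P.eval x} := by
  obtain ⟨M, hM⟩ := eventually_atTop.1
    ((P.tendsto_atBot_of_leadingCoeff_nonpos hdeg hlc).eventually_lt_atBot 0)
  exact ⟨M, fun x hx => le_of_not_gt fun hMx => (hM x hMx.le).not_ge hx⟩

theorem Real.sq_div_sqrt_one_add_le (x : ℝ) {y : ℝ} (hy : 0 ≤ y) : (x / √(1 + y)) ^ 2 ≤ x ^ 2 := by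
  rw [div_pow, Real.sq_sqrt (by positivity)]
  exact div_le_self (sq_nonneg x) (le_add_of_nonneg_right hy)

theorem isBounded_of_sq_add_sq_le {s : Set (ℝ × ℝ)} {M : ℝ} (h : ∀ q ∈ s, q.1 ^ 2 + q.2 ^ 2 ≤ M) :
    Bornology.IsBounded s := by
  refine (Metric.isBounded_closedBall (x := 0) (r := √M)).subset fun q hq => ?_
  rw [mem_closedBall_zero_iff, Prod.norm_def, Real.norm_eq_abs, Real.norm_eq_abs]
  have := h q hq
  exact max_le (Real.abs_le_sqrt (by nlinarith [sq_nonneg q.2]))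
    (Real.abs_le_sqrt (by nlinarith [sq_nonneg q.1]))

noncomputable def pPoly (a Λ₀ C : ℝ) : ℝ[X] :=
  Polynomial.C (-a ^ 2) * X ^ 4 + Polynomial.C (8 * a * Λ₀) * X ^ 3
    + Polynomial.C (-16 * Λ₀ ^ 2 - 8 * a * C) * X ^ 2 + Polynomial.C (64 + 32 * C * Λ₀) * X
    + Polynomial.C (-16 * C ^ 2)

theorem eval_pPoly (a Λ₀ C r : ℝ) : (pPoly a Λ₀ C).eval r = p a Λ₀ C r := by
  simp only [pPoly, p, eval_add, eval_mul, eval_C, eval_pow, eval_X]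
  ring

theorem natDegree_pPoly {a : ℝ} (ha : a ≠ 0) (Λ₀ C : ℝ) : (pPoly a Λ₀ C).natDegree = 4 := by
  unfold pPoly
  compute_degree!

theorem leadingCoeff_pPoly {a : ℝ} (ha : a ≠ 0) (Λ₀ C : ℝ) :
    (pPoly a Λ₀ C).leadingCoeff = -a ^ 2 := by
  rw [leadingCoeff, natDegree_pPoly ha]
  simp only [pPoly, coeff_add, coeff_C_mul, coeff_X_pow, coeff_X, coeff_C]
  norm_num

theorem bddAbove_setOf_p_nonneg {a : ℝ} (ha : a ≠ 0) (Λ₀ C : ℝ) :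
    BddAbove {r | 0 ≤ p a Λ₀ C r} := by
  have hdeg : 0 < (pPoly a Λ₀ C).degree := by
    rw [← natDegree_pos_iff_degree_pos, natDegree_pPoly ha]
    norm_num
  simpa only [eval_pPoly] using
    bddAbove_setOf_eval_nonneg hdeg ((leadingCoeff_pPoly ha Λ₀ C).trans_le (neg_nonpos.2 (sq_nonneg a)))

theorem p_eq (a Λ₀ C r : ℝ) : p a Λ₀ C r = 16 * (4 * r - (C - Λ₀ * r + a / 4 * r ^ 2) ^ 2) := by
  unfold p
  ring

theorem p_G_nonneg (ω Λ₀ a ξ₁ ξ₂ : ℝ) : 0 ≤ p a Λ₀ (G ω Λ₀ a ξ₁ ξ₂) (ξ₁ ^ 2 + ξ₂ ^ 2) := by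
  have hG : G ω Λ₀ a ξ₁ ξ₂ - Λ₀ * (ξ₁ ^ 2 + ξ₂ ^ 2) + a / 4 * (ξ₁ ^ 2 + ξ₂ ^ 2) ^ 2
      = 2 * ξ₂ / √(1 + ω ^ 2 * ξ₁ ^ 2) := by
    unfold G
    ring
  have hsq := Real.sq_div_sqrt_one_add_le (2 * ξ₂) (by positivity : 0 ≤ ω ^ 2 * ξ₁ ^ 2)
  rw [p_eq, hG]
  nlinarith [sq_nonneg ξ₁]

theorem level_sets_bounded_general (ω Λ₀ a C : ℝ) (ha : a ≠ 0) :
    (∀ ξ₁ ξ₂ : ℝ, G ω Λ₀ a ξ₁ ξ₂ = C → p a Λ₀ C (ξ₁^2 + ξ₂^2) ≥ 0) ∧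
    (∃ M : ℝ, ∀ r : ℝ, p a Λ₀ C r ≥ 0 → r ≤ M) ∧
    Bornology.IsBounded {q : ℝ × ℝ | G ω Λ₀ a q.1 q.2 = C} := by
  have hlevel : ∀ ξ₁ ξ₂ : ℝ, G ω Λ₀ a ξ₁ ξ₂ = C → p a Λ₀ C (ξ₁^2 + ξ₂^2) ≥ 0 := by
    rintro ξ₁ ξ₂ rfl
    exact p_G_nonneg ω Λ₀ a ξ₁ ξ₂
  obtain ⟨M, hM⟩ := bddAbove_setOf_p_nonneg ha Λ₀ C
  exact ⟨hlevel, ⟨M, fun _ hr => hM hr⟩,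
    isBounded_of_sq_add_sq_le fun q hq => hM (hlevel q.1 q.2 hq)⟩

theorem level_sets_bounded (ω Λ₀ a C : ℝ) (hω : ω > 0) (ha : a ≠ 0) :
    (∀ ξ₁ ξ₂ : ℝ, G ω Λ₀ a ξ₁ ξ₂ = C → p a Λ₀ C (ξ₁^2 + ξ₂^2) ≥ 0) ∧
    (∃ M : ℝ, ∀ r : ℝ, p a Λ₀ C r ≥ 0 → r ≤ M) ∧
    Bornology.IsBounded {q : ℝ × ℝ | G ω Λ₀ a q.1 q.2 = C} :=
  level_sets_bounded_general ω Λ₀ a C ha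
end

section
/- Fix ω > 0, a ≠ 0, Λ₀, C real, and let r ≥ 0 with p(r) ≥ 0 where p(r) = −16C² + 64r + 32CΛ₀r − 16Λ₀²r² − 8aCr² + 8aΛ₀r³ − a²r⁴. Then the point (ξ₁, ξ₂) with ξ₁ = √(p(r)) / √(64 + (4C + r(−4Λ₀ + ar))²ω²) and ξ₂ = (4C + r(−4Λ₀ + ar))·√(1 + rω²) / √(64 + (4C + r(−4Λ₀ + ar))²ω²) satisfies ξ₁² + ξ₂² = r and G(ξ₁, ξ₂) = C. -/
theorem p_eq_sub_sq (a Λ₀ C r : ℝ) :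
    p a Λ₀ C r = 64 * r - (4 * C + r * (-4 * Λ₀ + a * r))^2 := by
  unfold p; ring

section

variable {B r ω : ℝ}

theorem sq_sqrt_div_sqrt {x y : ℝ} (hx : 0 ≤ x) (hy : 0 ≤ y) : (√x / √y)^2 = x / y := by
  rw [div_pow, Real.sq_sqrt hx, Real.sq_sqrt hy]

theorem rho_sq_add_sq (hB : B^2 ≤ 64 * r) :
    (√(64 * r - B^2) / √(64 + B^2 * ω^2))^2
      + (B * √(1 + r * ω^2) / √(64 + B^2 * ω^2))^2 = r := by
  have hr : 0 ≤ r := by nlinarith [sq_nonneg B]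
  have hD : 0 < 64 + B^2 * ω^2 := by positivity
  rw [sq_sqrt_div_sqrt (by linarith) hD.le, mul_div_assoc, mul_pow,
    sq_sqrt_div_sqrt (by positivity) hD.le]
  field_simp
  ring

theorem sqrt_one_add_sq_mul_rho_sq (hB : B^2 ≤ 64 * r) :
    √(1 + ω^2 * (√(64 * r - B^2) / √(64 + B^2 * ω^2))^2)
      = 8 * √(1 + r * ω^2) / √(64 + B^2 * ω^2) := by
  have hD : 0 < 64 + B^2 * ω^2 := by positivity
  have hquot : 1 + ω^2 * (64 * r - B^2) / (64 + B^2 * ω^2)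
      = 8^2 * (1 + r * ω^2) / (64 + B^2 * ω^2) := by
    field_simp
    ring
  rw [sq_sqrt_div_sqrt (by linarith) hD.le, ← mul_div_assoc, hquot, Real.sqrt_div' _ hD.le,
    Real.sqrt_mul (by norm_num), Real.sqrt_sq (by norm_num)]

theorem two_mul_rho_div_sqrt (hB : B^2 ≤ 64 * r) :
    2 * (B * √(1 + r * ω^2) / √(64 + B^2 * ω^2))
      / √(1 + ω^2 * (√(64 * r - B^2) / √(64 + B^2 * ω^2))^2) = B / 4 := by
  have hr : 0 ≤ r := by nlinarith [sq_nonneg B]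
  have h₁ : 0 < √(1 + r * ω^2) := Real.sqrt_pos.mpr (by positivity)
  have hD : 0 < √(64 + B^2 * ω^2) := Real.sqrt_pos.mpr (by positivity)
  rw [sqrt_one_add_sq_mul_rho_sq hB]
  field_simp
  ring

end

theorem rho_parametrizes_level_set_general (ω Λ₀ a C r : ℝ)
    (hp : p a Λ₀ C r ≥ 0)
    (ξ₁ ξ₂ : ℝ)
    (hξ₁ : ξ₁ = Real.sqrt (p a Λ₀ C r) /
        Real.sqrt (64 + (4 * C + r * (-4 * Λ₀ + a * r))^2 * ω^2))
    (hξ₂ : ξ₂ = (4 * C + r * (-4 * Λ₀ + a * r)) * Real.sqrt (1 + r * ω^2) /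
        Real.sqrt (64 + (4 * C + r * (-4 * Λ₀ + a * r))^2 * ω^2)) :
    ξ₁^2 + ξ₂^2 = r ∧ G ω Λ₀ a ξ₁ ξ₂ = C := by
  rw [p_eq_sub_sq] at hp hξ₁
  set B := 4 * C + r * (-4 * Λ₀ + a * r) with hB
  have hB64 : B^2 ≤ 64 * r := by linarith
  have hsum : ξ₁^2 + ξ₂^2 = r := by
    rw [hξ₁, hξ₂]
    exact rho_sq_add_sq hB64
  refine ⟨hsum, ?_⟩
  have hfirst : 2 * ξ₂ / √(1 + ω^2 * ξ₁^2) = B / 4 := by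
    rw [hξ₁, hξ₂]
    exact two_mul_rho_div_sqrt hB64
  rw [G, hsum, hfirst, hB]
  ring

theorem rho_parametrizes_level_set (ω Λ₀ a C r : ℝ) (hω : ω > 0) (ha : a ≠ 0)
    (hr : 0 ≤ r) (hp : p a Λ₀ C r ≥ 0)
    (ξ₁ ξ₂ : ℝ)
    (hξ₁ : ξ₁ = Real.sqrt (p a Λ₀ C r) /
        Real.sqrt (64 + (4 * C + r * (-4 * Λ₀ + a * r))^2 * ω^2))
    (hξ₂ : ξ₂ = (4 * C + r * (-4 * Λ₀ + a * r)) * Real.sqrt (1 + r * ω^2) /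
        Real.sqrt (64 + (4 * C + r * (-4 * Λ₀ + a * r))^2 * ω^2)) :
    ξ₁^2 + ξ₂^2 = r ∧ G ω Λ₀ a ξ₁ ξ₂ = C :=
  rho_parametrizes_level_set_general ω Λ₀ a C r hp ξ₁ ξ₂ hξ₁ hξ₂
end
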